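/- arXiv:2502.10449 — 5 statements merged into one kernel-verified Lean document; each statement's English description precedes it below -/
import Mathlib

section
/- Let G be a graph, s,t ∈ V(G), and V' ⊆ V(G). Suppose there exist disjoint sets S,T ⊆ V(G) with s ∈ S, t ∈ T, G[S] and G[T] connected, no edges between S and T, V' ∩ (S ∪ T) = ∅, and for every v ∈ V', the induced subgraph G[S ∪ T ∪ {v}] is connected. Then there exists a minimal st-separator Z of G with V' ⊆ Z. -/
open SimpleGraph

/-- `Z` is an `ST`-separator: `Z` is disjoint from `S ∪ T` and in `G − Z`
there is no path from a vertex of `S` to a vertex of `T`. -/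
def IsSTSep {V : Type*} (G : SimpleGraph V) (S T Z : Set V) : Prop :=
  Disjoint Z (S ∪ T) ∧
    ∀ (a b : V) (ha : a ∈ Zᶜ) (hb : b ∈ Zᶜ), a ∈ S → b ∈ T →
      ¬ (G.induce Zᶜ).Reachable ⟨a, ha⟩ ⟨b, hb⟩

/-- `Z` is a minimal `ST`-separator: no proper subset is an `ST`-separator. -/
def IsMinSTSep {V : Type*} (G : SimpleGraph V) (S T Z : Set V) : Prop :=
  IsSTSep G S T Z ∧ ∀ Z' ⊂ Z, ¬ IsSTSep G S T Z'

private def inclHom {V : Type*} (G : SimpleGraph V) {A B : Set V} (h : A ⊆ B) :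
    G.induce A →g G.induce B :=
  ⟨Set.inclusion h, fun hab => hab⟩

private lemma reach_mono {V : Type*} (G : SimpleGraph V) {A B : Set V} (h : A ⊆ B)
    {a b : V} (ha : a ∈ A) (hb : b ∈ A)
    (hr : (G.induce A).Reachable ⟨a, ha⟩ ⟨b, hb⟩) :
    (G.induce B).Reachable ⟨a, h ha⟩ ⟨b, h hb⟩ :=
  hr.map (inclHom G h)

private lemma walk_stay {V : Type*} (G : SimpleGraph V) {S T : Set V} (hd : Disjoint S T)
    (hE : ∀ a ∈ S, ∀ b ∈ T, ¬ G.Adj a b) {C : Set V} (hC : C ⊆ S ∪ T) :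
    ∀ {u v : C}, (G.induce C).Walk u v → (u : V) ∈ S → (v : V) ∈ S := by
  intro u v p
  induction p with
  | nil => exact id
  | @cons u w v h p ih =>
    intro hu
    have hadj : G.Adj (u : V) (w : V) := h
    rcases hC w.2 with hwS | hwT
    · exact ih hwS
    · exact absurd hadj (hE _ hu _ hwT)

theorem stmt1 {V : Type*} [Fintype V] (G : SimpleGraph V) (s t : V) (V' S T : Set V)
    (hs : s ∈ S) (ht : t ∈ T) (hd : Disjoint S T)
    (hSc : (G.induce S).Connected) (hTc : (G.induce T).Connected)
    (hE : ∀ a ∈ S, ∀ b ∈ T, ¬ G.Adj a b)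
    (hV' : V' ∩ (S ∪ T) = ∅)
    (hext : ∀ v ∈ V', (G.induce (S ∪ T ∪ {v})).Connected) :
    ∃ Z : Set V, IsMinSTSep G {s} {t} Z ∧ V' ⊆ Z := by
  classical
  set W : Set V := (S ∪ T)ᶜ with hW
  have hV'W : V' ⊆ W := by
    intro x hx hxST
    exact absurd (Set.mem_inter hx hxST) (by rw [hV']; exact id)
  -- monotonicity of separation
  have hsep_mono : ∀ {Z₁ Z₂ : Set V}, Z₁ ⊆ Z₂ → Z₂ ⊆ W →
      IsSTSep G {s} {t} Z₁ → IsSTSep G {s} {t} Z₂ := by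
    intro Z₁ Z₂ h12 h2W h1
    refine ⟨?_, ?_⟩
    · rw [Set.disjoint_left]
      rintro x hx (hxs | hxt)
      · rw [Set.mem_singleton_iff] at hxs; subst hxs
        exact (h2W hx) (Or.inl hs)
      · rw [Set.mem_singleton_iff] at hxt; subst hxt
        exact (h2W hx) (Or.inr ht)
    · rintro a b ha hb has hbt r
      rw [Set.mem_singleton_iff] at has hbt; subst has; subst hbt
      have hcc : (Z₂ᶜ : Set V) ⊆ Z₁ᶜ := Set.compl_subset_compl.mpr h12
      exact h1.2 a b (hcc ha) (hcc hb) rfl rfl (reach_mono G hcc ha hb r)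
  -- W is a separator
  have hWsep : IsSTSep G {s} {t} W := by
    refine ⟨?_, ?_⟩
    · rw [Set.disjoint_left]
      rintro x hx (hxs | hxt)
      · rw [Set.mem_singleton_iff] at hxs; subst hxs
        exact hx (Or.inl hs)
      · rw [Set.mem_singleton_iff] at hxt; subst hxt
        exact hx (Or.inr ht)
    · rintro a b ha hb has hbt r
      rw [Set.mem_singleton_iff] at has hbt; subst has; subst hbt
      have hC : (Wᶜ : Set V) ⊆ S ∪ T := by rw [hW, compl_compl]
      obtain ⟨p⟩ := r
      exact Set.disjoint_left.mp hd (walk_stay G hd hE hC p hs) ht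
  -- minimal cardinality member of the family
  set F : Set (Set V) := {Z : Set V | V' ⊆ Z ∧ Z ⊆ W ∧ IsSTSep G {s} {t} Z} with hF
  have hWF : W ∈ F := ⟨hV'W, subset_rfl, hWsep⟩
  obtain ⟨Z, hZF, hmin⟩ :=
    Set.exists_min_image F Set.ncard (Set.toFinite F) ⟨W, hWF⟩
  obtain ⟨hZV', hZW, hZsep⟩ := hZF
  -- key: removing any vertex from Z destroys separation
  have hkey : ∀ v ∈ Z, ¬ IsSTSep G {s} {t} (Z \ {v}) := by
    intro v hv hsep'
    by_cases hvV' : v ∈ V'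
    · -- use connectivity of G[S ∪ T ∪ {v}]
      have hsub : (S ∪ T ∪ {v} : Set V) ⊆ (Z \ {v})ᶜ := by
        rintro x (hxST | hxv)
        · intro hxZ
          exact (hZW hxZ.1) hxST
        · rw [Set.mem_singleton_iff] at hxv; subst hxv
          intro hxZ; exact hxZ.2 rfl
      have hsmem : s ∈ (S ∪ T ∪ {v} : Set V) := Or.inl (Or.inl hs)
      have htmem : t ∈ (S ∪ T ∪ {v} : Set V) := Or.inl (Or.inr ht)
      have hr : (G.induce (S ∪ T ∪ {v})).Reachable ⟨s, hsmem⟩ ⟨t, htmem⟩ :=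
        (hext v hvV').preconnected _ _
      exact hsep'.2 s t (hsub hsmem) (hsub htmem) rfl rfl
        (reach_mono G hsub hsmem htmem hr)
    · -- contradicts minimal cardinality
      have hmem : (Z \ {v}) ∈ F := by
        refine ⟨?_, fun x hx => hZW hx.1, hsep'⟩
        intro x hx
        exact ⟨hZV' hx, fun hxv => hvV' (by rwa [Set.mem_singleton_iff] at hxv ▸ hx)⟩
      have hlt : (Z \ {v}).ncard < Z.ncard :=
        Set.ncard_diff_singleton_lt_of_mem hv (Set.toFinite Z)
      exact absurd (hmin _ hmem) (by omega)
  refine ⟨Z, ⟨hZsep, ?_⟩, hZV'⟩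
  intro Z' hZ' hsep'
  obtain ⟨v, hvZ, hvZ'⟩ := Set.exists_of_ssubset hZ'
  have hsub : Z' ⊆ Z \ {v} := by
    intro x hx
    exact ⟨hZ'.subset hx, fun hxv => hvZ' (by rw [Set.mem_singleton_iff] at hxv; subst hxv; exact hx)⟩
  exact hkey v hvZ (hsep_mono hsub (fun x hx => hZW hx.1) hsep')
end

section
/- Let G be a graph, S,T ⊆ V(G) disjoint with G[S] and G[T] connected and no edges between S and T. If N(S) ∩ N(T) has size at least k, then G contains a minimal ST-separator (a minimal set disjoint from S∪T whose removal leaves no path from S to T) of size at least k. -/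
open SimpleGraph

/-- Open neighborhood of a vertex set. -/
def setNbhd {V : Type*} (G : SimpleGraph V) (S : Set V) : Set V :=
  {v | v ∉ S ∧ ∃ u ∈ S, G.Adj u v}

/-
Every `ST`-separator contains each common neighbour `w` of `S` and `T`, since otherwise
`s – w – t` would be a path from `S` to `T` avoiding it. As there are no `S`–`T` edges,
`(S ∪ T)ᶜ` is an `ST`-separator, and in a finite graph some separator is minimal.
-/

namespace SimpleGraph

variable {V : Type*} {G : SimpleGraph V}

theorem Reachable.of_forall_adj_imp {P : V → Prop} (hP : ∀ ⦃u v⦄, G.Adj u v → P u → P v)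
    {u v : V} (h : G.Reachable u v) (hu : P u) : P v := by
  rw [reachable_iff_reflTransGen] at h
  induction h with
  | refl => exact hu
  | tail _ hadj ih => exact hP hadj ih

end SimpleGraph

section Separators

variable {V : Type*} {G : SimpleGraph V} {S T Z : Set V}

theorem IsSTSep.setNbhd_inter_subset (hZ : IsSTSep G S T Z) :
    setNbhd G S ∩ setNbhd G T ⊆ Z := by
  rintro w ⟨⟨-, s, hs, hsw⟩, ⟨-, t, ht, htw⟩⟩
  by_contra hwZ
  have hsZ : s ∈ Zᶜ := fun h ↦ Set.disjoint_left.mp hZ.1 h (Or.inl hs)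
  have htZ : t ∈ Zᶜ := fun h ↦ Set.disjoint_left.mp hZ.1 h (Or.inr ht)
  have hsw' : (G.induce Zᶜ).Adj ⟨s, hsZ⟩ ⟨w, hwZ⟩ := hsw
  have hwt' : (G.induce Zᶜ).Adj ⟨w, hwZ⟩ ⟨t, htZ⟩ := htw.symm
  exact hZ.2 s t hsZ htZ hs ht (hsw'.reachable.trans hwt'.reachable)

theorem isSTSep_compl_union (hd : Disjoint S T) (hE : ∀ a ∈ S, ∀ b ∈ T, ¬ G.Adj a b) :
    IsSTSep G S T (S ∪ T)ᶜ := by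
  refine ⟨disjoint_compl_left, fun a b ha hb haS hbT hab ↦ ?_⟩
  have hS_closed : ∀ ⦃x y : ↥(S ∪ T)ᶜᶜ⦄, (G.induce (S ∪ T)ᶜᶜ).Adj x y →
      (x : V) ∈ S → (y : V) ∈ S := by
    intro x y hxy hx
    exact (not_not.mp y.2).resolve_right (hE _ hx _ · hxy)
  exact Set.disjoint_left.mp hd (hab.of_forall_adj_imp hS_closed haS) hbT

theorem isMinSTSep_iff_minimal : IsMinSTSep G S T Z ↔ Minimal (IsSTSep G S T) Z :=
  Set.minimal_iff_forall_ssubset.symm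

theorem IsSTSep.exists_isMinSTSep_subset [Finite V] (hZ : IsSTSep G S T Z) :
    ∃ Z' ⊆ Z, IsMinSTSep G S T Z' := by
  simpa only [isMinSTSep_iff_minimal] using exists_minimal_le_of_wellFoundedLT _ Z hZ

end Separators

theorem stmt2_general {V : Type*} [Fintype V] (G : SimpleGraph V) (S T : Set V) (k : ℕ)
    (hd : Disjoint S T)
    (hE : ∀ a ∈ S, ∀ b ∈ T, ¬ G.Adj a b)
    (hk : k ≤ (setNbhd G S ∩ setNbhd G T).ncard) :
    ∃ Z : Set V, IsMinSTSep G S T Z ∧ k ≤ Z.ncard := by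
  obtain ⟨Z, -, hZ⟩ := (isSTSep_compl_union hd hE).exists_isMinSTSep_subset
  exact ⟨Z, hZ, hk.trans (Set.ncard_le_ncard hZ.1.setNbhd_inter_subset)⟩

theorem stmt2 {V : Type*} [Fintype V] (G : SimpleGraph V) (S T : Set V) (k : ℕ)
    (hd : Disjoint S T)
    (hSc : (G.induce S).Connected) (hTc : (G.induce T).Connected)
    (hE : ∀ a ∈ S, ∀ b ∈ T, ¬ G.Adj a b)
    (hk : k ≤ (setNbhd G S ∩ setNbhd G T).ncard) :
    ∃ Z : Set V, IsMinSTSep G S T Z ∧ k ≤ Z.ncard :=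
  stmt2_general G S T k hd hE hk
end

section
/- Let G be a graph and S,T disjoint vertex sets with G[S], G[T] connected and no edges between S and T. Suppose v ∈ N(S) is such that every path in G from v to a vertex of T intersects N(S) \ {v}, or no such path exists. Then no minimal ST-separator disjoint from S ∪ T contains v. -/
open SimpleGraph

/-!
If `v ∈ Z`, then `Z \ {v}` is still an `ST`-separator, so `Z` is not minimal. Indeed, an
`S`–`T` path avoiding `Z \ {v}` must pass through `v`, since `Z` separates; its part from `v`
to `T` meets some `u ∈ N(S)` other than `v`. Stepping into `u` from one of its neighbours in `S`
and following the path from `u` on gives an `S`–`T` walk that avoids `v`, hence all of `Z`,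
which is impossible.
-/

namespace SimpleGraph

variable {V : Type*} {G : SimpleGraph V}

theorem reachable_induce_iff_exists_walk {s : Set V} {a b : V} (ha : a ∈ s) (hb : b ∈ s) :
    (G.induce s).Reachable ⟨a, ha⟩ ⟨b, hb⟩ ↔ ∃ p : G.Walk a b, ∀ x ∈ p.support, x ∈ s := by
  constructor
  · rintro ⟨q⟩
    have hq : ∀ x ∈ (q.map (Embedding.induce s).toHom).support, x ∈ s := by
      simp only [Walk.support_map, List.mem_map]
      rintro _ ⟨y, -, rfl⟩
      exact y.2
    exact ⟨_, hq⟩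
  · rintro ⟨p, hp⟩
    exact ⟨p.induce s hp⟩

theorem Walk.IsPath.start_notMem_support_dropUntil [DecidableEq V] {u v w : V} {p : G.Walk u v}
    (hp : p.IsPath) (hw : w ∈ p.support) (h : u ≠ w) : u ∉ (p.dropUntil w hw).support := by
  intro hu
  have hnd := hp.support_nodup
  rw [← p.take_spec hw, Walk.support_append, List.nodup_append] at hnd
  exact hnd.2.2 u (p.takeUntil w hw).start_mem_support u
    ((Walk.mem_support_iff _).mp hu |>.resolve_left h) rfl

end SimpleGraph

section

variable {V : Type*} {G : SimpleGraph V}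

theorem isSTSep_iff_forall_walk {S T Z : Set V} :
    IsSTSep G S T Z ↔
      Disjoint Z (S ∪ T) ∧ ∀ a ∈ S, ∀ b ∈ T, ∀ p : G.Walk a b, ∃ x ∈ p.support, x ∈ Z := by
  refine and_congr_right fun hdisj => ?_
  have hZc : ∀ x ∈ S ∪ T, x ∈ Zᶜ := fun x hx hxZ => hdisj.notMem_of_mem_left hxZ hx
  simp only [reachable_induce_iff_exists_walk, Set.mem_compl_iff, not_exists, not_forall,
    not_not, exists_prop]
  exact ⟨fun h a ha b hb => h a b (hZc a (.inl ha)) (hZc b (.inr hb)) ha hb,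
    fun h a b _ _ ha hb => h a ha b hb⟩

theorem IsSTSep.diff_singleton {S T Z : Set V} {v : V} (hZ : IsSTSep G S T Z)
    (hv : ∀ b ∈ T, ∀ p : G.Walk v b, ∃ u ∈ p.support, u ∈ setNbhd G S \ {v}) :
    IsSTSep G S T (Z \ {v}) := by
  classical
  rw [isSTSep_iff_forall_walk] at hZ ⊢
  obtain ⟨hdisj, hsep⟩ := hZ
  refine ⟨Set.disjoint_of_subset_left Set.sdiff_subset hdisj, fun a ha b hb p => ?_⟩
  let p' : G.Path a b := p.toPath
  suffices ∃ x ∈ p'.1.support, x ∈ Z \ {v} by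
    obtain ⟨x, hx, hxZ⟩ := this
    exact ⟨x, p.support_toPath_subset_support hx, hxZ⟩
  by_cases hvp : v ∈ p'.1.support
  · obtain ⟨u, hu, ⟨-, s, hs, hsu⟩, huv⟩ := hv b hb (p'.1.dropUntil v hvp)
    let r := (p'.1.dropUntil v hvp).dropUntil u hu
    have hvr : v ∉ r.support :=
      (p'.2.dropUntil hvp).start_notMem_support_dropUntil hu (Ne.symm huv)
    obtain ⟨x, hx, hxZ⟩ := hsep s hs b hb (r.cons hsu)
    rcases List.mem_cons.mp (r.support_cons hsu ▸ hx) with rfl | hx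
    · exact absurd (Or.inl hs) (hdisj.notMem_of_mem_left hxZ)
    · exact ⟨x, Walk.support_dropUntil_subset_support _ _
        (Walk.support_dropUntil_subset_support _ _ hx), hxZ, fun h => hvr (h ▸ hx)⟩
  · obtain ⟨x, hx, hxZ⟩ := hsep a ha b hb p'.1
    exact ⟨x, hx, hxZ, fun h => hvp (h ▸ hx)⟩

end

theorem stmt3_general {V : Type*} (G : SimpleGraph V) (S T : Set V) (v : V)
    (hpaths : ∀ b ∈ T, ∀ p : G.Walk v b, ∃ u ∈ p.support, u ∈ setNbhd G S \ {v}) :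
    ∀ Z : Set V, IsMinSTSep G S T Z → v ∉ Z := by
  rintro Z ⟨hZ, hmin⟩ hvZ
  exact hmin _ (Set.sdiff_singleton_ssubset.mpr hvZ) (hZ.diff_singleton hpaths)

theorem stmt3 {V : Type*} [Fintype V] (G : SimpleGraph V) (S T : Set V) (v : V)
    (hd : Disjoint S T)
    (hSc : (G.induce S).Connected) (hTc : (G.induce T).Connected)
    (hE : ∀ a ∈ S, ∀ b ∈ T, ¬ G.Adj a b)
    (hv : v ∈ setNbhd G S)
    (hpaths : ∀ b ∈ T, ∀ p : G.Walk v b, ∃ u ∈ p.support, u ∈ setNbhd G S \ {v}) :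
    ∀ Z : Set V, IsMinSTSep G S T Z → v ∉ Z :=
  stmt3_general G S T v hpaths
end

section
/- Let G be a graph, S,T disjoint vertex sets with G[S],G[T] connected and no edges between S and T, and suppose N(S) is a minimal ST-separator with |N(S)| < k. If Z is a minimal ST-separator of size at least k disjoint from S ∪ T, then there exists x ∈ N(S) \ N(T) with x ∉ Z, and moreover Z is a minimal separator between S ∪ {x} and T. -/
open SimpleGraph

theorem stmt7 {V : Type*} [Fintype V] (G : SimpleGraph V) (S T : Set V) (k : ℕ) (Z : Set V)
    (hd : Disjoint S T)
    (hSc : (G.induce S).Connected) (hTc : (G.induce T).Connected)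
    (hE : ∀ a ∈ S, ∀ b ∈ T, ¬ G.Adj a b)
    (hNS : IsMinSTSep G S T (setNbhd G S)) (hNSk : (setNbhd G S).ncard < k)
    (hZ : IsMinSTSep G S T Z) (hZk : k ≤ Z.ncard) :
    ∃ x ∈ setNbhd G S \ setNbhd G T, x ∉ Z ∧ IsMinSTSep G (S ∪ {x}) T Z := by
  have hZdisj : ∀ a ∈ Z, a ∉ S ∪ T := fun a ha => Set.disjoint_left.mp hZ.1.1 ha
  -- N(S) is not a subset of Z
  have hNSsub : ¬ setNbhd G S ⊆ Z := by
    intro hsub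
    have hne : setNbhd G S ≠ Z := by
      intro h; rw [h] at hNSk; omega
    exact hZ.2 (setNbhd G S) (ssubset_of_subset_of_ne hsub hne) hNS.1
  obtain ⟨x, hxNS, hxZ⟩ := Set.not_subset.mp hNSsub
  obtain ⟨hxS, s, hsS, hsx⟩ := hxNS
  have hsZ : s ∈ Zᶜ := fun h => hZdisj s h (Or.inl hsS)
  have hxZc : x ∈ Zᶜ := hxZ
  -- x is not in N(T)
  have hxNT : x ∉ setNbhd G T := by
    rintro ⟨hxT, t, htT, htx⟩
    have htZ : t ∈ Zᶜ := fun h => hZdisj t h (Or.inr htT)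
    have hadj1 : (G.induce Zᶜ).Adj ⟨s, hsZ⟩ ⟨x, hxZc⟩ := by simpa using hsx
    have hadj2 : (G.induce Zᶜ).Adj ⟨x, hxZc⟩ ⟨t, htZ⟩ := by simpa using htx.symm
    exact hZ.1.2 s t hsZ htZ hsS htT (hadj1.reachable.trans hadj2.reachable)
  have hxT : x ∉ T := fun h => hE s hsS x h hsx
  refine ⟨x, ⟨⟨hxS, s, hsS, hsx⟩, hxNT⟩, hxZ, ⟨?_, ?_⟩, ?_⟩
  · -- disjointness
    rw [Set.disjoint_left]
    rintro a haZ (haS | haT)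
    · rcases haS with haS | rfl
      · exact hZdisj a haZ (Or.inl haS)
      · exact hxZ haZ
    · exact hZdisj a haZ (Or.inr haT)
  · -- Z separates S ∪ {x} from T
    rintro a b ha hb (haS | rfl) hbT hr
    · exact hZ.1.2 a b ha hb haS hbT hr
    · have hadj1 : (G.induce Zᶜ).Adj ⟨s, hsZ⟩ ⟨a, ha⟩ := by simpa using hsx
      exact hZ.1.2 s b hsZ hb hsS hbT (hadj1.reachable.trans hr)
  · -- minimality
    intro Z' hZ' hsep
    refine hZ.2 Z' hZ' ⟨?_, ?_⟩
    · exact Set.disjoint_left.mpr fun a ha hau => hZdisj a (hZ'.1 ha) hau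
    · intro a b ha hb haS hbT hr
      exact hsep.2 a b ha hb (Or.inl haS) hbT hr
end

section
/- Let G be a graph, V' ⊆ V(G), and suppose there exists an induced subgraph G' of G such that G' is bipartite and for every v ∈ V', the induced subgraph G[V(G') ∪ {v}] contains an odd cycle. Then there exists a minimal odd cycle transversal Z of G with V' ⊆ Z. -/
open SimpleGraph

/-- `Z` is an odd cycle transversal: `G − Z` is bipartite. -/
def IsOCT {V : Type*} (G : SimpleGraph V) (Z : Set V) : Prop :=
  (G.induce Zᶜ).Colorable 2

/-- `Z` is a minimal odd cycle transversal. -/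
def IsMinOCT {V : Type*} (G : SimpleGraph V) (Z : Set V) : Prop :=
  IsOCT G Z ∧ ∀ Z' ⊂ Z, ¬ IsOCT G Z'

/-- The induced subgraph on `A` contains an odd cycle. -/
def HasOddCycleOn {V : Type*} (G : SimpleGraph V) (A : Set V) : Prop :=
  ∃ (w : A) (c : (G.induce A).Walk w w), c.IsCycle ∧ Odd c.length

/-! Since `G - (V \ W) = G[W]` is bipartite, `V \ W` is an odd cycle transversal, and by
finiteness it contains a minimal one `Z`. Every `v ∈ V'` lies in `Z`: otherwise `G - Z` would
contain `G[W ∪ {v}]` and hence an odd cycle. -/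

section

variable {V : Type*} {G : SimpleGraph V}

lemma isMinOCT_iff_minimal {Z : Set V} : IsMinOCT G Z ↔ Minimal (IsOCT G) Z :=
  Set.minimal_iff_forall_ssubset.symm

lemma isOCT_compl_iff {W : Set V} : IsOCT G Wᶜ ↔ (G.induce W).Colorable 2 := by
  rw [IsOCT, compl_compl]

lemma HasOddCycleOn.not_colorable_two {A B : Set V} (h : HasOddCycleOn G A) (hAB : A ⊆ B) :
    ¬ (G.induce B).Colorable 2 := by
  obtain ⟨w, c, -, hodd⟩ := h
  intro hB
  have hA : (G.induce A).Colorable 2 := hB.of_hom (G.induceHomOfLE hAB).toHom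
  have := (c.three_le_chromaticNumber_of_odd_loop hodd).trans hA.chromaticNumber_le
  norm_num at this

lemma IsOCT.mem_of_hasOddCycleOn_insert {W Z : Set V} {v : V} (hZ : IsOCT G Z)
    (hZW : Z ⊆ Wᶜ) (hv : HasOddCycleOn G (W ∪ {v})) : v ∈ Z := by
  by_contra hvZ
  refine hv.not_colorable_two ?_ hZ
  rintro x (hxW | rfl)
  · exact fun hxZ ↦ hZW hxZ hxW
  · exact hvZ

lemma IsOCT.exists_isMinOCT_subset [Finite V] {Z : Set V} (hZ : IsOCT G Z) :
    ∃ Z' ⊆ Z, IsMinOCT G Z' := by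
  simp_rw [isMinOCT_iff_minimal]
  exact exists_minimal_le_of_wellFoundedLT _ Z hZ

end

theorem stmt9 {V : Type*} [Fintype V] (G : SimpleGraph V) (V' W : Set V)
    (hBip : (G.induce W).Colorable 2)
    (hOdd : ∀ v ∈ V', HasOddCycleOn G (W ∪ {v})) :
    ∃ Z : Set V, IsMinOCT G Z ∧ V' ⊆ Z := by
  obtain ⟨Z, hZW, hZ⟩ := (isOCT_compl_iff.mpr hBip).exists_isMinOCT_subset
  exact ⟨Z, hZ, fun v hv ↦ hZ.1.mem_of_hasOddCycleOn_insert hZW (hOdd v hv)⟩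
end
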